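/- Let f : ℝⁿ → ℝ be convex and x⋆ ∈ ℝⁿ with 0 ∉ ∂f(x⋆). Then the normal cone of f at x⋆, defined as N_f = {p : ⟨d,p⟩ ≤ 0 for all d in the tangent cone T_f}, equals the conic hull of the subdifferential: N_f = cone(∂f(x⋆)), where T_f = {d : f(x⋆ + t d) ≤ f(x⋆) for some t > 0}. -/

import Mathlib

/-!
Every subgradient is nonpositive on descent directions, so `cone(∂f(x⋆)) ⊆ N_f`. For the
converse, by the bipolar theorem it suffices to show `⟪d, p⟫ ≤ 0` for `p ∈ N_f` and every `d`
with `⟪u, d⟫ ≤ 0` on `∂f(x⋆)`. Separating the open strict epigraph of `f` from the horizontal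
ray `{(x⋆ + t • w, f x⋆) | t ≥ 0}` shows that a direction `w` along which `f` never decreases
carries a subgradient `u` with `⟪u, w⟫ ≥ 0`; hence every `d` with `⟪u, d⟫ < 0` on `∂f(x⋆)` is a
descent direction. As `0 ∉ ∂f(x⋆)`, some `e` has `f (x⋆ + e) < f x⋆`, so `⟪u, e⟫ < 0` on
`∂f(x⋆)`; then each `d + ε • e` is a descent direction, and `ε → 0` gives `⟪d, p⟫ ≤ 0`.
-/

open scoped RealInnerProductSpace

variable {n : ℕ}

/-- The subdifferential of `f` at `x`. -/
def subdiff (f : EuclideanSpace ℝ (Fin n) → ℝ) (x : EuclideanSpace ℝ (Fin n)) :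
    Set (EuclideanSpace ℝ (Fin n)) :=
  {u | ∀ d, f x + ⟪u, d⟫ ≤ f (x + d)}

/-- The tangent cone (of descent directions) of `f` at `x`. -/
def tangentConeOf (f : EuclideanSpace ℝ (Fin n) → ℝ) (x : EuclideanSpace ℝ (Fin n)) :
    Set (EuclideanSpace ℝ (Fin n)) :=
  {d | ∃ t > (0 : ℝ), f (x + t • d) ≤ f x}

/-- The normal cone of `f` at `x`: the polar of the tangent cone. -/
def normalConeOf (f : EuclideanSpace ℝ (Fin n) → ℝ) (x : EuclideanSpace ℝ (Fin n)) :
    Set (EuclideanSpace ℝ (Fin n)) :=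
  {p | ∀ d ∈ tangentConeOf f x, ⟪d, p⟫ ≤ 0}

open Filter Topology

section ConvexGeometry

variable {E : Type*} [NormedAddCommGroup E] [InnerProductSpace ℝ E] {s : Set E}

def conicHull (s : Set E) : Set E :=
  {p | ∃ t : ℝ, 0 ≤ t ∧ ∃ u ∈ s, p = t • u}

theorem Convex.mem_closure_conicHull_iff [CompleteSpace E] (hs : Convex ℝ s) (hne : s.Nonempty)
    {p : E} : p ∈ closure (conicHull s) ↔ ∀ d, (∀ u ∈ s, ⟪u, d⟫ ≤ 0) → ⟪d, p⟫ ≤ 0 := by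
  refine ⟨fun hp d hd => ?_, fun hp => ?_⟩
  · have hsub : conicHull s ⊆ {q | ⟪d, q⟫ ≤ 0} := by
      rintro _ ⟨t, ht, u, hu, rfl⟩
      rw [Set.mem_ofPred_eq, real_inner_smul_right, real_inner_comm]
      exact mul_nonpos_of_nonneg_of_nonpos ht (hd u hu)
    exact closure_minimal hsub (isClosed_le (by fun_prop) continuous_const) hp
  by_contra hpc
  set K := (ConvexCone.hull ℝ s).closure
  have hK : IsClosed (K : Set E) := isClosed_closure
  have hsK : s ⊆ K := (ConvexCone.subset_hull).trans subset_closure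
  have hpK : p ∉ K := by
    refine fun h => hpc (closure_mono (fun q hq => ?_) h)
    obtain ⟨r, hr, u, hu, rfl⟩ := (ConvexCone.mem_hull_of_convex hs).1 hq
    exact ⟨r, hr.le, u, hu, rfl⟩
  obtain ⟨y, hy, hpy⟩ := ProperCone.hyperplane_separation'
    ⟨K.toPointedCone (.of_nonempty_of_isClosed (hne.mono hsK) hK), hK⟩ hpK
  have := hp (-y) fun u hu => by rw [inner_neg_right]; linarith [hy u (hsK hu)]
  rw [inner_neg_left, real_inner_comm] at this
  linarith

theorem exists_separation_strictEpigraph_ray [CompleteSpace E] {f : E → ℝ} (hf : ConvexOn ℝ Set.univ f)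
    (hcont : Continuous f) {x w : E} (hw : ∀ t : ℝ, 0 ≤ t → f x ≤ f (x + t • w)) :
    ∃ (v : E) (b c : ℝ), (∀ y r, f y < r → ⟪v, y⟫ - b * r < c) ∧
      ∀ t : ℝ, 0 ≤ t → c ≤ ⟪v, x + t • w⟫ - b * f x := by
  set O : Set (E × ℝ) := {q | f q.1 < q.2}
  have hOopen : IsOpen O := isOpen_lt (hcont.comp continuous_fst) continuous_snd
  have hOconv : Convex ℝ O := by simpa using hf.convex_strict_epigraph
  set ray : ℝ →ᵃ[ℝ] E × ℝ := AffineMap.lineMap (x, f x) (x + w, f x)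
  have hray : ∀ t, ray t = (x + t • w, f x) := fun t => by
    simp [ray, AffineMap.lineMap_apply, add_comm]
  have hdisj : Disjoint O (ray '' Set.Ici 0) := by
    refine Set.disjoint_left.2 ?_
    rintro _ hq ⟨t, ht, rfl⟩
    rw [hray] at hq
    exact (hw t ht).not_gt hq
  obtain ⟨ℓ, c, hO, hR⟩ :=
    geometric_hahn_banach_open hOconv hOopen ((convex_Ici 0).affine_image _) hdisj
  set v := (InnerProductSpace.toDual ℝ E).symm (ℓ.comp (ContinuousLinearMap.inl ℝ E ℝ))
  set b := -ℓ (0, 1)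
  have hℓ : ∀ y r, ℓ (y, r) = ⟪v, y⟫ - b * r := fun y r => by
    have hyr : ((y, r) : E × ℝ) = (y, 0) + r • (0, 1) := by simp
    rw [hyr, map_add, map_smul, InnerProductSpace.toDual_symm_apply, smul_eq_mul]
    simp only [ContinuousLinearMap.comp_apply, ContinuousLinearMap.inl_apply, b]
    ring
  refine ⟨v, b, c, fun y r h => hℓ y r ▸ hO (y, r) h, fun t ht => ?_⟩
  rw [← hℓ, ← hray]
  exact hR _ ⟨t, ht, rfl⟩

end ConvexGeometry

theorem exists_mem_subdiff_inner_nonneg {f : EuclideanSpace ℝ (Fin n) → ℝ}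
    (hf : ConvexOn ℝ Set.univ f) {x w : EuclideanSpace ℝ (Fin n)}
    (hw : ∀ t : ℝ, 0 ≤ t → f x ≤ f (x + t • w)) : ∃ u ∈ subdiff f x, 0 ≤ ⟪u, w⟫ := by
  obtain ⟨v, b, c, hO, hR⟩ := exists_separation_strictEpigraph_ray hf
    (continuousOn_univ.1 (hf.continuousOn isOpen_univ)) hw
  have hc : c ≤ ⟪v, x⟫ - b * f x := by simpa using hR 0 le_rfl
  have hb : 0 < b := by linarith [hO x (f x + 1) (by linarith)]
  have hgraph : ∀ y, ⟪v, y⟫ - b * f y ≤ c := fun y =>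
    le_of_forall_pos_lt_add fun ε hε => by
      have := hO y (f y + ε / b) (by linarith [div_pos hε hb])
      rw [mul_add, mul_div_cancel₀ _ hb.ne'] at this
      linarith
  -- `(v, -b)` is the normal of a supporting hyperplane of the epigraph at `(x, f x)`
  refine ⟨b⁻¹ • v, fun d => ?_, ?_⟩
  · have hvd : ⟪v, d⟫ ≤ b * (f (x + d) - f x) := by
      linarith [hgraph (x + d), inner_add_right (𝕜 := ℝ) v x d]
    rw [real_inner_smul_left]
    linarith [(inv_mul_le_iff₀ hb).2 hvd]
  · have := hR 1 zero_le_one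
    rw [one_smul, inner_add_right] at this
    rw [real_inner_smul_left]
    exact mul_nonneg (inv_nonneg.2 hb.le) (by linarith [hgraph x])

theorem subdiff_nonempty {f : EuclideanSpace ℝ (Fin n) → ℝ} (hf : ConvexOn ℝ Set.univ f)
    (x : EuclideanSpace ℝ (Fin n)) : (subdiff f x).Nonempty :=
  have hw : ∀ t : ℝ, 0 ≤ t → f x ≤ f (x + t • 0) := fun _ _ => by simp
  let ⟨u, hu, _⟩ := exists_mem_subdiff_inner_nonneg hf hw
  ⟨u, hu⟩

theorem convex_subdiff (f : EuclideanSpace ℝ (Fin n) → ℝ) (x : EuclideanSpace ℝ (Fin n)) :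
    Convex ℝ (subdiff f x) := by
  intro u hu v hv a b ha hb hab d
  rw [inner_add_left, real_inner_smul_left, real_inner_smul_left]
  have := add_le_add (mul_le_mul_of_nonneg_left (hu d) ha) (mul_le_mul_of_nonneg_left (hv d) hb)
  linear_combination this + (f (x + d) - f x) * hab

theorem inner_nonpos_of_mem_subdiff_of_mem_tangentConeOf {f : EuclideanSpace ℝ (Fin n) → ℝ}
    {x u d : EuclideanSpace ℝ (Fin n)} (hu : u ∈ subdiff f x) (hd : d ∈ tangentConeOf f x) :
    ⟪u, d⟫ ≤ 0 := by
  obtain ⟨t, ht, hdesc⟩ := hd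
  have := hu (t • d)
  rw [real_inner_smul_right] at this
  exact nonpos_of_mul_nonpos_right (by linarith) ht

theorem mem_tangentConeOf_of_forall_inner_neg {f : EuclideanSpace ℝ (Fin n) → ℝ}
    (hf : ConvexOn ℝ Set.univ f) {x d : EuclideanSpace ℝ (Fin n)}
    (hd : ∀ u ∈ subdiff f x, ⟪u, d⟫ < 0) : d ∈ tangentConeOf f x := by
  by_contra hdT
  have hw : ∀ t : ℝ, 0 ≤ t → f x ≤ f (x + t • d) := by
    intro t ht
    rcases ht.eq_or_lt with rfl | ht
    · simp
    · exact le_of_not_ge fun h => hdT ⟨t, ht, h⟩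
  obtain ⟨u, hu, hud⟩ := exists_mem_subdiff_inner_nonneg hf hw
  exact (hd u hu).not_ge hud

theorem exists_forall_inner_neg_of_zero_notMem_subdiff {f : EuclideanSpace ℝ (Fin n) → ℝ}
    {x : EuclideanSpace ℝ (Fin n)} (h0 : 0 ∉ subdiff f x) :
    ∃ e, ∀ u ∈ subdiff f x, ⟪u, e⟫ < 0 := by
  obtain ⟨e, he⟩ : ∃ e, f (x + e) < f x := by
    by_contra! h
    exact h0 fun d => by simpa using h d
  exact ⟨e, fun u hu => by linarith [hu e]⟩

theorem inner_nonpos_of_mem_normalConeOf {f : EuclideanSpace ℝ (Fin n) → ℝ}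
    (hf : ConvexOn ℝ Set.univ f) {x p d : EuclideanSpace ℝ (Fin n)} (h0 : 0 ∉ subdiff f x)
    (hp : p ∈ normalConeOf f x) (hd : ∀ u ∈ subdiff f x, ⟪u, d⟫ ≤ 0) : ⟪d, p⟫ ≤ 0 := by
  obtain ⟨e, he⟩ := exists_forall_inner_neg_of_zero_notMem_subdiff h0
  -- `d + ε • e` is a descent direction for every `ε > 0`; let `ε → 0`
  have hε : ∀ ε : ℝ, 0 < ε → ⟪d + ε • e, p⟫ ≤ 0 := fun ε hε =>
    hp _ <| mem_tangentConeOf_of_forall_inner_neg hf fun u hu => by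
      rw [inner_add_right, real_inner_smul_right]
      nlinarith [hd u hu, he u hu]
  have hlim : Tendsto (fun ε : ℝ => ⟪d + ε • e, p⟫) (𝓝[>] 0) (𝓝 ⟪d, p⟫) := by
    have : Continuous fun ε : ℝ => ⟪d + ε • e, p⟫ := by fun_prop
    simpa using (this.tendsto 0).mono_left nhdsWithin_le_nhds
  exact le_of_tendsto hlim (eventually_nhdsWithin_of_forall hε)

/-- If `f` is convex and `0 ∉ ∂f(x⋆)`, then the normal cone of `f` at `x⋆` equals the
(closed conic hull) `cone(∂f(x⋆))` of the subdifferential. -/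
theorem normalCone_eq_cone_subdiff (f : EuclideanSpace ℝ (Fin n) → ℝ)
    (hf : ConvexOn ℝ Set.univ f) (xstar : EuclideanSpace ℝ (Fin n))
    (h0 : (0 : EuclideanSpace ℝ (Fin n)) ∉ subdiff f xstar) :
    normalConeOf f xstar
      = closure {p | ∃ t : ℝ, 0 ≤ t ∧ ∃ u ∈ subdiff f xstar, p = t • u} := by
  change _ = closure (conicHull (subdiff f xstar))
  ext p
  rw [(convex_subdiff f xstar).mem_closure_conicHull_iff (subdiff_nonempty hf xstar)]
  exact ⟨fun hp d hd => inner_nonpos_of_mem_normalConeOf hf h0 hp hd,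
    fun hp d hd => hp d fun u hu => inner_nonpos_of_mem_subdiff_of_mem_tangentConeOf hu hd⟩
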